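/- arXiv:2207.09702 — 3 statements merged into one kernel-verified Lean document; each statement's English description precedes it below -/
import Mathlib

section
/- Let V₄ be the image in S₄ = Equiv.Perm (Fin 4) of the commutator subgroup of A₄ = alternatingGroup (Fin 4), i.e. V₄ = Subgroup.map (alternatingGroup (Fin 4)).subtype (commutator (alternatingGroup (Fin 4))). Then the commutator ⁅alternatingGroup (Fin 4), (⊤ : Subgroup (Equiv.Perm (Fin 4)))⁆ is NOT contained in V₄. (Consequently, the subcrossed module (V₄, A₄) of the crossed module (S₄, S₄, id) fails the normality condition [N₂, T₁] ⊆ N₁, so the exact sequence 1 → R A₄ → R S₄ → R(ℤ/2) → 1 admits no fiberwise localization for the nullification functor P_{Xℤ}.) -/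
/-!
The commutator subgroup of `A₄` is the Klein four-group, so every element of `V₄` squares to `1`.
But commuting the even permutation `(0 1)(1 2)` with the transposition `(0 1)` gives a 3-cycle,
which lies in `⁅A₄, S₄⁆` and does not square to `1`.
-/

open Equiv
open scoped commutatorElement

namespace alternatingGroup

theorem sq_eq_one_of_mem_map_commutator {α : Type*} [DecidableEq α] [Fintype α]
    (hα4 : Nat.card α = 4) {g : Perm α}
    (hg : g ∈ (commutator (alternatingGroup α)).map (alternatingGroup α).subtype) :
    g ^ 2 = 1 := by
  obtain ⟨k, hk, rfl⟩ := hg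
  rw [← kleinFour_eq_commutator hα4] at hk
  have hpow := Monoid.pow_exponent_eq_one (⟨k, hk⟩ : kleinFour α)
  rw [exponent_kleinFour_of_card_eq_four hα4] at hpow
  exact congrArg (Subtype.val ∘ Subtype.val) hpow

end alternatingGroup

/-- With V₄ the image in S₄ of the commutator subgroup of A₄,
the commutator ⁅A₄, S₄⁆ is NOT contained in V₄. -/
theorem commutator_alternating_top_not_le_V4 :
    ¬ (⁅alternatingGroup (Fin 4), (⊤ : Subgroup (Equiv.Perm (Fin 4)))⁆ ≤
        Subgroup.map (alternatingGroup (Fin 4)).subtype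
          (commutator (alternatingGroup (Fin 4)))) := by
  intro h
  have hc : swap (0 : Fin 4) 1 * swap 1 2 ∈ alternatingGroup (Fin 4) := by
    rw [Perm.mem_alternatingGroup]; decide
  have hmem := h (Subgroup.commutator_mem_commutator hc (Subgroup.mem_top (swap 0 1)))
  have hsq_ne_one : ⁅swap (0 : Fin 4) 1 * swap 1 2, swap (0 : Fin 4) 1⁆ ^ 2 ≠ 1 := by
    rw [commutatorElement_def]; decide
  exact hsq_ne_one (alternatingGroup.sq_eq_one_of_mem_map_commutator (by simp) hmem)
end

section
/- In the dihedral group D₈ = DihedralGroup 4, the commutator subgroup C₂ = commutator (DihedralGroup 4) satisfies ⁅(⊤ : Subgroup (DihedralGroup 4)), commutator (DihedralGroup 4)⁆ = ⊥ while commutator (DihedralGroup 4) ≠ ⊥. (Hence for the kernel crossed module (C₂ ↪ D₈) of the nullification morphism ℓ : R D₈ → P_{Xℤ}(R D₈), one has P_{Xℤ}(C₂ ↪ D₈) = (C₂/[D₈,C₂], 1) = (C₂, 1) ≠ 1, so the kernel of the nullification morphism is not Xℤ-acyclic.) -/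
/-! Every commutator in the dihedral group of order `2n` is a rotation by an even amount `r (2k)`,
and a reflection commutes with `r (2k)` as soon as `4k = 0`; so for `n ∣ 4` the commutator subgroup
is central. It is nontrivial because `D₈` is not commutative. -/

namespace DihedralGroup

variable {n : ℕ}

open scoped commutatorElement

theorem exists_commutatorElement_eq_r_two_mul (g h : DihedralGroup n) :
    ∃ k : ZMod n, ⁅g, h⁆ = r (2 * k) := by
  rcases g with i | i <;> rcases h with j | j
  case' r.r => refine ⟨0, ?_⟩
  case' r.sr => refine ⟨i, ?_⟩
  case' sr.r => refine ⟨-j, ?_⟩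
  case' sr.sr => refine ⟨j - i, ?_⟩
  all_goals
    simp only [commutatorElement_def, inv_r, inv_sr, r_mul_r, r_mul_sr, sr_mul_r, sr_mul_sr, r.injEq]
    ring

theorem r_two_mul_mem_center (hn : n ∣ 4) (k : ZMod n) :
    r (2 * k) ∈ Subgroup.center (DihedralGroup n) := by
  have h4 : (4 : ZMod n) = 0 := by exact_mod_cast (ZMod.natCast_eq_zero_iff 4 n).mpr hn
  rw [Subgroup.mem_center_iff]
  rintro (i | i)
  · simp [add_comm]
  · simp only [sr_mul_r, r_mul_sr, sr.injEq]
    linear_combination k * h4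

theorem commutator_le_center_of_dvd_four (hn : n ∣ 4) :
    commutator (DihedralGroup n) ≤ Subgroup.center (DihedralGroup n) := by
  rw [commutator_def, Subgroup.commutator_le]
  intro g _ h _
  obtain ⟨k, hk⟩ := exists_commutatorElement_eq_r_two_mul g h
  exact hk ▸ r_two_mul_mem_center hn k

end DihedralGroup

/-- In D₈, the commutator subgroup C₂ is central and nontrivial:
⁅D₈, C₂⁆ = ⊥ and C₂ ≠ ⊥. -/
theorem commutator_dihedral_central_nontrivial :
    ⁅(⊤ : Subgroup (DihedralGroup 4)), commutator (DihedralGroup 4)⁆ = ⊥ ∧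
      commutator (DihedralGroup 4) ≠ ⊥ := by
  refine ⟨Subgroup.commutator_top_left_eq_bot_iff_le_center.mpr
    (DihedralGroup.commutator_le_center_of_dvd_four dvd_rfl), ?_⟩
  rw [Ne, commutator_eq_bot_iff]
  exact DihedralGroup.not_commutative (by decide) (by decide)
end

section
/- Let (N₁, N₂) be a normal subcrossed module of the crossed module (T₁, T₂, ∂, φ) (so in particular N₁ is normal in T₁ and N₂ is normal in T₂). Then the componentwise quotient is again a crossed module: there exists a group homomorphism φ̄ : T₂ ⧸ N₂ →* MulAut (T₁ ⧸ N₁) satisfying φ̄ (⟦t₂⟧) (⟦t₁⟧) = ⟦φ t₂ t₁⟧ for all t₂ ∈ T₂ and t₁ ∈ T₁, and the induced homomorphism ∂̄ : T₁ ⧸ N₁ →* T₂ ⧸ N₂ (with ∂̄ ⟦t₁⟧ = ⟦∂ t₁⟧) together with φ̄ satisfies the crossed module axioms: ∂̄(φ̄ b x) = b * ∂̄ x * b⁻¹ for all b ∈ T₂ ⧸ N₂, x ∈ T₁ ⧸ N₁, and φ̄ (∂̄ x) y = x * y * x⁻¹ for all x, y ∈ T₁ ⧸ N₁. -/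
/-!
Since φ preserves N₁, each automorphism φ t₂ descends to T₁ ⧸ N₁; the condition
φ n₂ t₁ * t₁⁻¹ ∈ N₁ says that N₂ acts trivially there, so the action factors through
T₂ ⧸ N₂. Both crossed module identities then hold on representatives.
-/

namespace Subgroup

variable {G T : Type*} [Group G] [Group T] {φ : G →* MulAut T} {N : Subgroup T}

theorem map_mulAut_eq_of_forall_mem (hN : ∀ g, ∀ n ∈ N, φ g n ∈ N) (g : G) :
    N.map (φ g : T ≃* T).toMonoidHom = N := by
  refine le_antisymm ?_ fun n hn => ⟨φ g⁻¹ n, hN _ n hn, ?_⟩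
  · rintro _ ⟨n, hn, rfl⟩
    exact hN g n hn
  · change φ g (φ g⁻¹ n) = n
    rw [← MulAut.mul_apply, ← map_mul, mul_inv_cancel, map_one, MulAut.one_apply]

end Subgroup

namespace QuotientGroup

variable {G T : Type*} [Group G] [Group T]

def mulAutOfInvariant (φ : G →* MulAut T) (N : Subgroup T) [N.Normal]
    (hN : ∀ g, ∀ n ∈ N, φ g n ∈ N) : G →* MulAut (T ⧸ N) where
  toFun g := congr N N (φ g) (N.map_mulAut_eq_of_forall_mem hN g)
  map_one' := by
    ext x
    induction x using QuotientGroup.induction_on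
    change ((φ 1 _ : T) : T ⧸ N) = _
    rw [map_one, MulAut.one_apply, MulAut.one_apply]
  map_mul' g h := by
    ext x
    induction x using QuotientGroup.induction_on
    change ((φ (g * h) _ : T) : T ⧸ N) = _
    rw [map_mul, MulAut.mul_apply]
    rfl

theorem mulAutOfInvariant_eq_one (φ : G →* MulAut T) (N : Subgroup T) [N.Normal]
    (hN : ∀ g, ∀ n ∈ N, φ g n ∈ N) {g : G} (hg : ∀ t, φ g t * t⁻¹ ∈ N) :
    mulAutOfInvariant φ N hN g = 1 := by
  ext x
  induction x using QuotientGroup.induction_on with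
  | H t => exact eq_iff_div_mem.2 (by rw [div_eq_mul_inv]; exact hg t)

end QuotientGroup

open QuotientGroup

theorem quotient_crossed_module_general
    {T₁ T₂ : Type*} [Group T₁] [Group T₂]
    (δ : T₁ →* T₂) (φ : T₂ →* MulAut T₁)
    (equiv : ∀ (b : T₂) (x : T₁), δ (φ b x) = b * δ x * b⁻¹)
    (peiffer : ∀ x y : T₁, φ (δ x) y = x * y * x⁻¹)
    (N₁ : Subgroup T₁) (N₂ : Subgroup T₂)
    [N₁.Normal] [N₂.Normal]
    (sub_δ : ∀ n₁ ∈ N₁, δ n₁ ∈ N₂)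
    (norm_act : ∀ (t₂ : T₂), ∀ n₁ ∈ N₁, φ t₂ n₁ ∈ N₁)
    (norm_comm : ∀ n₂ ∈ N₂, ∀ t₁ : T₁, φ n₂ t₁ * t₁⁻¹ ∈ N₁) :
    ∃ (δbar : T₁ ⧸ N₁ →* T₂ ⧸ N₂) (φbar : (T₂ ⧸ N₂) →* MulAut (T₁ ⧸ N₁)),
      (∀ t₁ : T₁, δbar ((t₁ : T₁ ⧸ N₁)) = ((δ t₁ : T₂) : T₂ ⧸ N₂)) ∧
      (∀ (t₂ : T₂) (t₁ : T₁),
        φbar ((t₂ : T₂ ⧸ N₂)) ((t₁ : T₁ ⧸ N₁)) = ((φ t₂ t₁ : T₁) : T₁ ⧸ N₁)) ∧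
      (∀ (b : T₂ ⧸ N₂) (x : T₁ ⧸ N₁), δbar (φbar b x) = b * δbar x * b⁻¹) ∧
      (∀ x y : T₁ ⧸ N₁, φbar (δbar x) y = x * y * x⁻¹) := by
  have hN₂ : N₂ ≤ (mulAutOfInvariant φ N₁ norm_act).ker := fun n hn =>
    mulAutOfInvariant_eq_one φ N₁ norm_act (norm_comm n hn)
  refine ⟨map N₁ N₂ δ sub_δ, lift N₂ _ hN₂, fun _ => rfl, fun _ _ => rfl, ?_, ?_⟩
  · rintro ⟨b⟩ ⟨x⟩
    exact congrArg (mk (s := N₂)) (equiv b x)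
  · rintro ⟨x⟩ ⟨y⟩
    exact congrArg (mk (s := N₁)) (peiffer x y)

/-- The componentwise quotient of a crossed module (T₁, T₂, δ, φ)
by a normal subcrossed module (N₁, N₂) is again a crossed module: there are an
induced boundary map δ̄ : T₁ ⧸ N₁ →* T₂ ⧸ N₂ and an induced action
φ̄ : T₂ ⧸ N₂ →* MulAut (T₁ ⧸ N₁) satisfying the crossed module axioms. -/
theorem quotient_crossed_module
    {T₁ T₂ : Type*} [Group T₁] [Group T₂]
    (δ : T₁ →* T₂) (φ : T₂ →* MulAut T₁)
    (equiv : ∀ (b : T₂) (x : T₁), δ (φ b x) = b * δ x * b⁻¹)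
    (peiffer : ∀ x y : T₁, φ (δ x) y = x * y * x⁻¹)
    (N₁ : Subgroup T₁) (N₂ : Subgroup T₂)
    [N₁.Normal] [N₂.Normal]
    (sub_δ : ∀ n₁ ∈ N₁, δ n₁ ∈ N₂)
    (sub_act : ∀ n₂ ∈ N₂, ∀ n₁ ∈ N₁, φ n₂ n₁ ∈ N₁)
    (norm_act : ∀ (t₂ : T₂), ∀ n₁ ∈ N₁, φ t₂ n₁ ∈ N₁)
    (norm_comm : ∀ n₂ ∈ N₂, ∀ t₁ : T₁, φ n₂ t₁ * t₁⁻¹ ∈ N₁) :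
    ∃ (δbar : T₁ ⧸ N₁ →* T₂ ⧸ N₂) (φbar : (T₂ ⧸ N₂) →* MulAut (T₁ ⧸ N₁)),
      (∀ t₁ : T₁, δbar ((t₁ : T₁ ⧸ N₁)) = ((δ t₁ : T₂) : T₂ ⧸ N₂)) ∧
      (∀ (t₂ : T₂) (t₁ : T₁),
        φbar ((t₂ : T₂ ⧸ N₂)) ((t₁ : T₁ ⧸ N₁)) = ((φ t₂ t₁ : T₁) : T₁ ⧸ N₁)) ∧
      (∀ (b : T₂ ⧸ N₂) (x : T₁ ⧸ N₁), δbar (φbar b x) = b * δbar x * b⁻¹) ∧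
      (∀ x y : T₁ ⧸ N₁, φbar (δbar x) y = x * y * x⁻¹) :=
  quotient_crossed_module_general δ φ equiv peiffer N₁ N₂ sub_δ norm_act norm_comm
end
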